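/- arXiv:1809.02303 — 2 statements merged into one kernel-verified Lean document; each statement's English description precedes it below -/
import Mathlib

section
/- Let $X_1,\dots,X_n$ be real numbers, $q \in \mathbb{R}$, and $\hat Q$ any real number. Then $\left|\frac{1}{n}\sum_{k=1}^n (X_k - q)\big(\mathbf{1}\{X_k \ge \hat Q\} - \mathbf{1}\{X_k \ge q\}\big)\right| \le |\hat Q - q| \cdot \left|\frac{1}{n}\sum_{k=1}^n \mathbf{1}\{X_k \ge \hat Q\} - \frac{1}{n}\sum_{k=1}^n \mathbf{1}\{X_k \ge q\}\right|$. -/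
open Finset

/-- Key deterministic inequality from the Bahadur representation proof: the averaged product
`(Xₖ - q)(1{Xₖ ≥ Q̂} - 1{Xₖ ≥ q})` is bounded by `|Q̂ - q|` times the difference of the
averaged indicators. -/
theorem bahadur_indicator_inequality (n : ℕ) (X : ℕ → ℝ) (q Qhat : ℝ) :
    |(n : ℝ)⁻¹ * ∑ k ∈ Finset.range n,
        (X k - q) * ((if Qhat ≤ X k then (1 : ℝ) else 0) - (if q ≤ X k then (1 : ℝ) else 0))|
      ≤ |Qhat - q| *
        |(n : ℝ)⁻¹ * ∑ k ∈ Finset.range n, (if Qhat ≤ X k then (1 : ℝ) else 0)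
          - (n : ℝ)⁻¹ * ∑ k ∈ Finset.range n, (if q ≤ X k then (1 : ℝ) else 0)| := by
  set d : ℕ → ℝ := fun k =>
    (if Qhat ≤ X k then (1 : ℝ) else 0) - (if q ≤ X k then (1 : ℝ) else 0) with hd
  have habs : ∀ k, |(X k - q) * d k| ≤ |Qhat - q| * |d k| := by
    intro k
    simp only [hd]
    rw [abs_mul]
    split_ifs with h1 h2 h2
    · simp
    · push_neg at h2
      have h : |X k - q| ≤ |Qhat - q| := by
        rw [abs_of_nonpos (by linarith), abs_of_nonpos (by linarith)]
        linarith
      have := abs_nonneg ((1:ℝ) - 0)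
      nlinarith [abs_nonneg (Qhat - q)]
    · push_neg at h1
      have h : |X k - q| ≤ |Qhat - q| := by
        rw [abs_of_nonneg (by linarith), abs_of_nonneg (by linarith)]
        linarith
      nlinarith [abs_nonneg (Qhat - q), abs_nonneg ((0:ℝ) - 1)]
    · simp
  have hsum : |∑ k ∈ Finset.range n, d k| = ∑ k ∈ Finset.range n, |d k| := by
    rcases le_total q Qhat with h | h
    · have hneg : ∀ k ∈ Finset.range n, d k ≤ 0 := by
        intro k _
        simp only [hd]
        split_ifs <;> norm_num <;> linarith
      rw [abs_of_nonpos (Finset.sum_nonpos hneg), ← Finset.sum_neg_distrib]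
      exact Finset.sum_congr rfl fun k hk => (abs_of_nonpos (hneg k hk)).symm
    · have hpos : ∀ k ∈ Finset.range n, 0 ≤ d k := by
        intro k _
        simp only [hd]
        split_ifs <;> norm_num <;> linarith
      rw [abs_of_nonneg (Finset.sum_nonneg hpos)]
      exact Finset.sum_congr rfl fun k hk => (abs_of_nonneg (hpos k hk)).symm
  have hn : (0 : ℝ) ≤ (n : ℝ)⁻¹ := by positivity
  calc |(n : ℝ)⁻¹ * ∑ k ∈ Finset.range n, (X k - q) * d k|
      = (n : ℝ)⁻¹ * |∑ k ∈ Finset.range n, (X k - q) * d k| := by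
        rw [abs_mul, abs_of_nonneg hn]
    _ ≤ (n : ℝ)⁻¹ * ∑ k ∈ Finset.range n, |(X k - q) * d k| := by
        gcongr
        exact Finset.abs_sum_le_sum_abs _ _
    _ ≤ (n : ℝ)⁻¹ * ∑ k ∈ Finset.range n, |Qhat - q| * |d k| := by
        gcongr with k hk
        exact habs k
    _ = |Qhat - q| * ((n : ℝ)⁻¹ * ∑ k ∈ Finset.range n, |d k|) := by
        rw [← Finset.mul_sum]; ring
    _ = |Qhat - q| * |(n : ℝ)⁻¹ * ∑ k ∈ Finset.range n, d k| := by
        rw [abs_mul, abs_of_nonneg hn, hsum]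
    _ = _ := by
        rw [← mul_sub, ← Finset.sum_sub_distrib]
end

section
/- Let $X_1,\dots,X_n$ be real numbers, fix $p \in (0,1)$, $q\in\mathbb{R}$, and write $\hat F_n(x) = n^{-1}\sum_k \mathbf{1}\{X_k \le x\}$ and $\hat Q_n$ for the empirical $p$-quantile. Assume the $X_k$ are pairwise distinct. Then $\Big|\hat Q_n + \frac{1}{(1-p)n}\sum_{k=1}^n [X_k - \hat Q_n]_+ - q - \frac{1}{(1-p)n}\sum_{k=1}^n [X_k - q]_+\Big| \le \frac{1}{1-p}\,|\hat Q_n - q|\,\big(2|\hat F_n(\hat Q_n) - p| + |\hat F_n(q) - p|\big) + \frac{2}{(1-p)n}|\hat Q_n - q|$, where $[x]_+ = \max(x,0)$. -/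
open Finset

/-- Empirical distribution function of the sample `X 0, …, X (n-1)`. -/
noncomputable def empCDF (n : ℕ) (X : ℕ → ℝ) (x : ℝ) : ℝ :=
  (n : ℝ)⁻¹ * ∑ i ∈ Finset.range n, (if X i ≤ x then (1 : ℝ) else 0)

/-- Empirical `p`-quantile `inf {x : F̂ₙ(x) ≥ p}`. -/
noncomputable def empQuantile (n : ℕ) (X : ℕ → ℝ) (p : ℝ) : ℝ :=
  sInf {x : ℝ | p ≤ empCDF n X x}

lemma key_pointwise (Q q x : ℝ) :
    |max (x - Q) 0 - max (x - q) 0 + (Q - q) * (1 - (if x ≤ Q then (1:ℝ) else 0))|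
      ≤ |Q - q| * |(if x ≤ Q then (1:ℝ) else 0) - (if x ≤ q then (1:ℝ) else 0)| := by
  rcases le_or_gt x Q with h1 | h1 <;> rcases le_or_gt x q with h2 | h2
  · simp [h1, h2, max_eq_right (sub_nonpos.mpr h1), max_eq_right (sub_nonpos.mpr h2)]
  · rw [if_pos h1, if_neg (not_le.mpr h2), max_eq_right (sub_nonpos.mpr h1),
      max_eq_left (sub_nonneg.mpr h2.le)]
    have e1 : |(0:ℝ) - (x - q) + (Q - q) * (1 - 1)| = x - q := by
      rw [abs_of_nonpos (by nlinarith)]; ring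
    have e2 : |Q - q| = Q - q := abs_of_nonneg (by linarith)
    rw [e1, e2]
    simp
    linarith
  · rw [if_neg (not_le.mpr h1), if_pos h2, max_eq_left (sub_nonneg.mpr h1.le),
      max_eq_right (sub_nonpos.mpr h2)]
    have e1 : |(x - Q) - 0 + (Q - q) * (1 - 0)| = q - x := by
      rw [abs_of_nonpos (by nlinarith)]; ring
    have e2 : |Q - q| = q - Q := by rw [abs_of_nonpos (by linarith)]; ring
    rw [e1, e2]
    simp
    linarith
  · rw [if_neg (not_le.mpr h1), if_neg (not_le.mpr h2),
      max_eq_left (sub_nonneg.mpr h1.le), max_eq_left (sub_nonneg.mpr h2.le)]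
    have e1 : (x - Q) - (x - q) + (Q - q) * (1 - 0) = 0 := by ring
    rw [e1]
    simp

/-- Central deterministic chain of inequalities in the Bahadur representation for expected
shortfall: for pairwise distinct samples, the CVaR objective evaluated at the empirical
quantile `Q̂ₙ` and at `q` differ by at most
`(1-p)⁻¹ |Q̂ₙ - q| (2|F̂ₙ(Q̂ₙ) - p| + |F̂ₙ(q) - p|) + 2|Q̂ₙ - q| / ((1-p) n)`. -/
theorem cvar_objective_difference_bound (n : ℕ) (hn : 1 ≤ n) (X : ℕ → ℝ)
    (hdist : ∀ i < n, ∀ j < n, i ≠ j → X i ≠ X j)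
    (p : ℝ) (hp : p ∈ Set.Ioo (0 : ℝ) 1) (q : ℝ) :
    |empQuantile n X p
        + (1 / ((1 - p) * n)) * ∑ k ∈ Finset.range n, max (X k - empQuantile n X p) 0
        - q - (1 / ((1 - p) * n)) * ∑ k ∈ Finset.range n, max (X k - q) 0|
      ≤ (1 / (1 - p)) * |empQuantile n X p - q| *
          (2 * |empCDF n X (empQuantile n X p) - p| + |empCDF n X q - p|)
        + (2 / ((1 - p) * n)) * |empQuantile n X p - q| := by
  obtain ⟨hp0, hp1⟩ := hp
  have h1p : (0:ℝ) < 1 - p := by linarith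
  have hN : (0:ℝ) < (n:ℝ) := by exact_mod_cast Nat.pos_of_ne_zero (by omega)
  set Q := empQuantile n X p with hQdef
  set A := ∑ k ∈ Finset.range n, max (X k - Q) 0 with hA
  set B := ∑ k ∈ Finset.range n, max (X k - q) 0 with hB
  set CQ := ∑ k ∈ Finset.range n, (if X k ≤ Q then (1:ℝ) else 0) with hCQ
  set Cq := ∑ k ∈ Finset.range n, (if X k ≤ q then (1:ℝ) else 0) with hCq
  have hFQ : empCDF n X Q = (n:ℝ)⁻¹ * CQ := rfl
  have hFq : empCDF n X q = (n:ℝ)⁻¹ * Cq := rfl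
  set E := A - B + (Q - q) * ((n:ℝ) - CQ) with hE
  -- bound on E
  have hEsum : E = ∑ k ∈ Finset.range n,
      (max (X k - Q) 0 - max (X k - q) 0 + (Q - q) * (1 - (if X k ≤ Q then (1:ℝ) else 0))) := by
    rw [hE, hA, hB, hCQ]
    rw [Finset.sum_add_distrib, Finset.sum_sub_distrib, ← Finset.mul_sum,
      Finset.sum_sub_distrib, Finset.sum_const, Finset.card_range, nsmul_eq_mul, mul_one]
  have hsumabs : ∑ k ∈ Finset.range n,
      |(if X k ≤ Q then (1:ℝ) else 0) - (if X k ≤ q then (1:ℝ) else 0)| = |CQ - Cq| := by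
    rcases le_total Q q with h | h
    · have hmono : ∀ k, (if X k ≤ Q then (1:ℝ) else 0) ≤ (if X k ≤ q then (1:ℝ) else 0) := by
        intro k
        by_cases hk : X k ≤ Q
        · simp [hk, hk.trans h]
        · by_cases hk' : X k ≤ q <;> simp [hk, hk']
      have h1 : CQ ≤ Cq := Finset.sum_le_sum fun k _ => hmono k
      rw [abs_of_nonpos (by linarith)]
      rw [Finset.sum_congr rfl fun k _ => abs_of_nonpos (by linarith [hmono k])]
      rw [Finset.sum_neg_distrib, Finset.sum_sub_distrib]
    · have hmono : ∀ k, (if X k ≤ q then (1:ℝ) else 0) ≤ (if X k ≤ Q then (1:ℝ) else 0) := by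
        intro k
        by_cases hk : X k ≤ q
        · simp [hk, hk.trans h]
        · by_cases hk' : X k ≤ Q <;> simp [hk, hk']
      have h1 : Cq ≤ CQ := Finset.sum_le_sum fun k _ => hmono k
      rw [abs_of_nonneg (by linarith)]
      rw [Finset.sum_congr rfl fun k _ => abs_of_nonneg (by linarith [hmono k])]
      rw [Finset.sum_sub_distrib]
  have hEbound : |E| ≤ |Q - q| * |CQ - Cq| := by
    rw [hEsum]
    calc |∑ k ∈ Finset.range n, _| ≤ ∑ k ∈ Finset.range n,
          |max (X k - Q) 0 - max (X k - q) 0 + (Q - q) * (1 - (if X k ≤ Q then (1:ℝ) else 0))| :=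
        Finset.abs_sum_le_sum_abs _ _
      _ ≤ ∑ k ∈ Finset.range n,
          |Q - q| * |(if X k ≤ Q then (1:ℝ) else 0) - (if X k ≤ q then (1:ℝ) else 0)| :=
        Finset.sum_le_sum fun k _ => key_pointwise Q q (X k)
      _ = |Q - q| * |CQ - Cq| := by rw [← Finset.mul_sum, hsumabs]
  -- key algebraic identity
  have hid : Q + (1 / ((1 - p) * n)) * A - q - (1 / ((1 - p) * n)) * B
      = (Q - q) * (empCDF n X Q - p) / (1 - p) + (1 / ((1 - p) * n)) * E := by
    rw [hFQ, hE]
    field_simp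
    ring
  rw [hid]
  have habs1 : |(Q - q) * (empCDF n X Q - p) / (1 - p) + (1 / ((1 - p) * n)) * E|
      ≤ |Q - q| * |empCDF n X Q - p| / (1 - p) + (1 / ((1 - p) * n)) * |E| := by
    calc |(Q - q) * (empCDF n X Q - p) / (1 - p) + (1 / ((1 - p) * n)) * E|
        ≤ |(Q - q) * (empCDF n X Q - p) / (1 - p)| + |(1 / ((1 - p) * n)) * E| := abs_add_le _ _
      _ = |Q - q| * |empCDF n X Q - p| / (1 - p) + (1 / ((1 - p) * n)) * |E| := by
          rw [abs_div, abs_mul, abs_mul, abs_of_nonneg h1p.le,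
            abs_of_nonneg (by positivity : (0:ℝ) ≤ 1 / ((1 - p) * n))]
  have hCdiff : |CQ - Cq| = (n:ℝ) * |empCDF n X Q - empCDF n X q| := by
    rw [hFQ, hFq, ← mul_sub, abs_mul, abs_of_nonneg (by positivity : (0:ℝ) ≤ (n:ℝ)⁻¹)]
    field_simp
  have htri : |empCDF n X Q - empCDF n X q| ≤ |empCDF n X Q - p| + |empCDF n X q - p| := by
    calc |empCDF n X Q - empCDF n X q| ≤ |empCDF n X Q - p| + |p - empCDF n X q| :=
        abs_sub_le _ _ _
      _ = |empCDF n X Q - p| + |empCDF n X q - p| := by rw [abs_sub_comm p]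
  have hEb2 : (1 / ((1 - p) * n)) * |E|
      ≤ (1 / (1 - p)) * |Q - q| * (|empCDF n X Q - p| + |empCDF n X q - p|) := by
    have h2 : (1 / ((1 - p) * n)) * |E| ≤ (1 / ((1 - p) * n)) * (|Q - q| * |CQ - Cq|) := by
      apply mul_le_mul_of_nonneg_left hEbound (by positivity)
    rw [hCdiff] at h2
    calc (1 / ((1 - p) * n)) * |E|
        ≤ (1 / ((1 - p) * n)) * (|Q - q| * ((n:ℝ) * |empCDF n X Q - empCDF n X q|)) := h2
      _ = (1 / (1 - p)) * |Q - q| * |empCDF n X Q - empCDF n X q| := by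
          field_simp
      _ ≤ (1 / (1 - p)) * |Q - q| * (|empCDF n X Q - p| + |empCDF n X q - p|) := by
          apply mul_le_mul_of_nonneg_left htri (by positivity)
  have hextra : (0:ℝ) ≤ (2 / ((1 - p) * n)) * |Q - q| := by positivity
  have hmain : |Q - q| * |empCDF n X Q - p| / (1 - p)
      + (1 / (1 - p)) * |Q - q| * (|empCDF n X Q - p| + |empCDF n X q - p|)
      = (1 / (1 - p)) * |Q - q| * (2 * |empCDF n X Q - p| + |empCDF n X q - p|) := by
    field_simp
    ring
  nlinarith [habs1, hEb2, hmain, hextra]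
end
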